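/- Let k ≥ 2, let 0 < s < r < 1, let δ > 0, and fix the constant C > 0 from the quadratic estimate for the family Γ(s,r,δ). Let (F_j)_{j ≥ 1} be a sequence of holomorphic automorphisms of ℂ^k fixing the origin with s‖z‖ ≤ ‖F_j(z)‖ ≤ r‖z‖ for all z in the open ball B_δ and all j. Then each derivative A_j = dF_j(0) is invertible, and the maps Φ_j = A(j)⁻¹ ∘ F(j), where F(j) = F_j ∘ ⋯ ∘ F_1 and A(j) = A_j ∘ ⋯ ∘ A_1, satisfy ‖Φ_{j+1}(z) − Φ_j(z)‖ ≤ C δ² (r²/s)^j for all z ∈ B_δ and all j ≥ 0. -/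

import Mathlib

open Metric Set Filter

noncomputable section

/-- A holomorphic automorphism of `ℂ^k`: a holomorphic bijection with holomorphic inverse. -/
def IsAutomorphism {k : ℕ} (F : EuclideanSpace ℂ (Fin k) → EuclideanSpace ℂ (Fin k)) : Prop :=
  Differentiable ℂ F ∧ ∃ G : EuclideanSpace ℂ (Fin k) → EuclideanSpace ℂ (Fin k),
    Differentiable ℂ G ∧ Function.LeftInverse G F ∧ Function.RightInverse G F

/-- `seqComp F j = F j ∘ ⋯ ∘ F 1`, with `seqComp F 0 = id`. -/
def seqComp {α : Type*} (F : ℕ → α → α) : ℕ → α → α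
  | 0 => id
  | n + 1 => F (n + 1) ∘ seqComp F n

/-- `equivComp A j = A j ∘ ⋯ ∘ A 1` as a continuous linear equivalence,
with `equivComp A 0 = id`. -/
def equivComp {E : Type*} [NormedAddCommGroup E] [NormedSpace ℂ E]
    (A : ℕ → E ≃L[ℂ] E) : ℕ → E ≃L[ℂ] E
  | 0 => ContinuousLinearEquiv.refl ℂ E
  | n + 1 => (equivComp A n).trans (A (n + 1))


/-!
The derivative `A j = dF_j(0)` inherits the lower bound `s ‖v‖ ≤ ‖A j v‖` from `F j`, so the
inverse of `A(n) = A n ∘ ⋯ ∘ A 1` has norm at most `s⁻ⁿ`. Writing `w = F(n) z`, the difference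
`Φ_{n+1} z - Φ_n z` is `A(n)⁻¹ (A (n+1)⁻¹ (F (n+1) w) - w)`; since each `F j` contracts the ball
by the factor `r`, `‖w‖ ≤ rⁿ δ`, and the quadratic estimate bounds the inner vector by
`C r²ⁿ δ²`.
-/

open Topology

theorem HasFDerivAt.mul_norm_le_norm_apply {E G : Type*} [NormedAddCommGroup E] [NormedSpace ℝ E]
    [NormedAddCommGroup G] [NormedSpace ℝ G] {f : E → G} {f' : E →L[ℝ] G} {s : ℝ}
    (hf : HasFDerivAt f f' 0) (hf0 : f 0 = 0) (hs : ∀ᶠ z in 𝓝 0, s * ‖z‖ ≤ ‖f z‖) (v : E) :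
    s * ‖v‖ ≤ ‖f' v‖ := by
  have hline : HasDerivAt (fun t : ℝ => f (t • v)) (f' v) 0 := by
    have := ((zero_smul ℝ v).symm ▸ hf).comp_hasDerivAt (0 : ℝ) ((hasDerivAt_id 0).smul_const v)
    simpa [Function.comp_def] using this
  have hslope := hline.tendsto_slope_zero_right.norm
  refine ge_of_tendsto hslope ?_
  have hsmall : ∀ᶠ t : ℝ in 𝓝 0, s * ‖t • v‖ ≤ ‖f (t • v)‖ :=
    (Continuous.tendsto' (continuous_id.smul continuous_const) 0 0 (zero_smul ℝ v)).eventually hs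
  filter_upwards [nhdsWithin_le_nhds hsmall, self_mem_nhdsWithin] with t ht (htpos : 0 < t)
  rw [zero_add, zero_smul, hf0, sub_zero, norm_smul, norm_inv, Real.norm_of_nonneg htpos.le,
    le_inv_mul_iff₀ htpos]
  rw [norm_smul, Real.norm_of_nonneg htpos.le] at ht
  linarith

theorem exists_continuousLinearEquiv_coe_eq_fderiv {𝕜 E G : Type*} [NontriviallyNormedField 𝕜]
    [NormedAddCommGroup E] [NormedSpace 𝕜 E] [NormedAddCommGroup G] [NormedSpace 𝕜 G]
    {f : E → G} {g : G → E} {x : E} (hf : DifferentiableAt 𝕜 f x)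
    (hg : DifferentiableAt 𝕜 g (f x)) (hgf : Function.LeftInverse g f)
    (hfg : Function.RightInverse g f) :
    ∃ A : E ≃L[𝕜] G, (A : E →L[𝕜] G) = fderiv 𝕜 f x := by
  have hf' : HasFDerivAt f (fderiv 𝕜 f x) (g (f x)) := by rw [hgf x]; exact hf.hasFDerivAt
  have hgf' : (fderiv 𝕜 g (f x)).comp (fderiv 𝕜 f x) = .id 𝕜 E := by
    have := hg.hasFDerivAt.comp x hf.hasFDerivAt
    rw [hgf.comp_eq_id] at this
    exact this.unique (hasFDerivAt_id x)
  have hfg' : (fderiv 𝕜 f x).comp (fderiv 𝕜 g (f x)) = .id 𝕜 G := by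
    have := hf'.comp (f x) hg.hasFDerivAt
    rw [hfg.comp_eq_id] at this
    exact this.unique (hasFDerivAt_id (f x))
  exact ⟨.equivOfInverse' _ _ hfg' hgf', rfl⟩

theorem ContinuousLinearEquiv.norm_symm_apply_le_of_mul_norm_le {𝕜 E G : Type*}
    [NontriviallyNormedField 𝕜] [NormedAddCommGroup E] [NormedSpace 𝕜 E] [NormedAddCommGroup G]
    [NormedSpace 𝕜 G] {A : E ≃L[𝕜] G} {s : ℝ} (hs : 0 < s) (hA : ∀ v, s * ‖v‖ ≤ ‖A v‖) (w : G) :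
    ‖A.symm w‖ ≤ s⁻¹ * ‖w‖ := by
  simpa [le_inv_mul_iff₀ hs] using hA (A.symm w)

theorem seqComp_succ_apply {α : Type*} (F : ℕ → α → α) (n : ℕ) (x : α) :
    seqComp F (n + 1) x = F (n + 1) (seqComp F n x) := rfl

theorem seqComp_mapsTo {α : Type*} {F : ℕ → α → α} {t : Set α}
    (hF : ∀ j, 1 ≤ j → MapsTo (F j) t t) (n : ℕ) : MapsTo (seqComp F n) t t := by
  induction n with
  | zero => exact mapsTo_id t
  | succ n ih => exact (hF (n + 1) (by omega)).comp ih

theorem norm_seqComp_le {E : Type*} [SeminormedAddCommGroup E] {F : ℕ → E → E} {t : Set E}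
    {r : ℝ} (hr : 0 ≤ r) (hmaps : ∀ j, 1 ≤ j → MapsTo (F j) t t)
    (hF : ∀ j, 1 ≤ j → ∀ z ∈ t, ‖F j z‖ ≤ r * ‖z‖) {z : E} (hz : z ∈ t) (n : ℕ) :
    ‖seqComp F n z‖ ≤ r ^ n * ‖z‖ := by
  induction n with
  | zero => simp [seqComp]
  | succ n ih =>
    calc ‖seqComp F (n + 1) z‖ ≤ r * ‖seqComp F n z‖ :=
          hF (n + 1) (by omega) _ (seqComp_mapsTo hmaps n hz)
      _ ≤ r * (r ^ n * ‖z‖) := by gcongr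
      _ = r ^ (n + 1) * ‖z‖ := by ring

section equivComp

variable {E : Type*} [NormedAddCommGroup E] [NormedSpace ℂ E] {A : ℕ → E ≃L[ℂ] E}

theorem equivComp_succ_symm_apply (n : ℕ) (w : E) :
    (equivComp A (n + 1)).symm w = (equivComp A n).symm ((A (n + 1)).symm w) := rfl

theorem norm_equivComp_symm_apply_le {K : ℝ} (hK : 0 ≤ K)
    (hA : ∀ j, 1 ≤ j → ∀ w, ‖(A j).symm w‖ ≤ K * ‖w‖) (n : ℕ) (w : E) :
    ‖(equivComp A n).symm w‖ ≤ K ^ n * ‖w‖ := by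
  induction n generalizing w with
  | zero => simp [equivComp]
  | succ n ih =>
    calc ‖(equivComp A (n + 1)).symm w‖ ≤ K ^ n * ‖(A (n + 1)).symm w‖ := ih _
      _ ≤ K ^ n * (K * ‖w‖) := by gcongr; exact hA (n + 1) (by omega) w
      _ = K ^ (n + 1) * ‖w‖ := by ring

theorem equivComp_symm_seqComp_succ_sub (F : ℕ → E → E) (n : ℕ) (z : E) :
    (equivComp A (n + 1)).symm (seqComp F (n + 1) z) - (equivComp A n).symm (seqComp F n z)
      = (equivComp A n).symm
          ((A (n + 1)).symm (F (n + 1) (seqComp F n z)) - seqComp F n z) := by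
  rw [map_sub, equivComp_succ_symm_apply, seqComp_succ_apply]

theorem norm_equivComp_symm_seqComp_succ_sub_le {F : ℕ → E → E} {s r δ C : ℝ}
    (hs : 0 < s) (hr0 : 0 ≤ r) (hr1 : r ≤ 1) (hC : 0 ≤ C)
    (hA : ∀ j, 1 ≤ j → ∀ w, ‖(A j).symm w‖ ≤ s⁻¹ * ‖w‖)
    (hF : ∀ j, 1 ≤ j → ∀ z ∈ ball 0 δ, ‖F j z‖ ≤ r * ‖z‖)
    (hquad : ∀ j, 1 ≤ j → ∀ z ∈ ball 0 δ, ‖(A j).symm (F j z) - z‖ ≤ C * ‖z‖ ^ 2)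
    {z : E} (hz : z ∈ ball 0 δ) (n : ℕ) :
    ‖(equivComp A (n + 1)).symm (seqComp F (n + 1) z) - (equivComp A n).symm (seqComp F n z)‖
      ≤ C * δ ^ 2 * (r ^ 2 / s) ^ n := by
  have hmaps : ∀ j, 1 ≤ j → MapsTo (F j) (ball 0 δ) (ball (0 : E) δ) := fun j hj w hw => by
    have hFw := hF j hj w hw
    rw [mem_ball_zero_iff] at hw ⊢
    nlinarith [norm_nonneg w]
  have hw : ‖seqComp F n z‖ ≤ r ^ n * δ :=
    (norm_seqComp_le hr0 hmaps hF hz n).trans (by gcongr; exact (mem_ball_zero_iff.1 hz).le)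
  rw [equivComp_symm_seqComp_succ_sub]
  calc _ ≤ s⁻¹ ^ n * ‖(A (n + 1)).symm (F (n + 1) (seqComp F n z)) - seqComp F n z‖ :=
        norm_equivComp_symm_apply_le (by positivity) hA n _
    _ ≤ s⁻¹ ^ n * (C * (r ^ n * δ) ^ 2) := by
        gcongr
        exact (hquad (n + 1) (by omega) _ (seqComp_mapsTo hmaps n hz)).trans (by gcongr)
    _ = C * δ ^ 2 * (r ^ 2 / s) ^ n := by field_simp; ring

end equivComp

theorem telescoping_estimate_for_normalized_compositions_general (k : ℕ)
    (s r δ C : ℝ) (hs : 0 < s) (hsr : s < r) (hr1 : r < 1) (hδ : 0 < δ) (hC : 0 < C)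
    -- `C` is the constant from the quadratic estimate for the family `Γ(s,r,δ)`:
    (hquad : ∀ F : EuclideanSpace ℂ (Fin k) → EuclideanSpace ℂ (Fin k),
      DifferentiableOn ℂ F (Metric.ball 0 δ) →
      Set.InjOn F (Metric.ball 0 δ) →
      F 0 = 0 →
      (∀ z ∈ Metric.ball (0 : EuclideanSpace ℂ (Fin k)) δ,
        s * ‖z‖ ≤ ‖F z‖ ∧ ‖F z‖ ≤ r * ‖z‖) →
      ∀ A : EuclideanSpace ℂ (Fin k) ≃L[ℂ] EuclideanSpace ℂ (Fin k),
        (A : EuclideanSpace ℂ (Fin k) →L[ℂ] EuclideanSpace ℂ (Fin k)) = fderiv ℂ F 0 →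
        ∀ z ∈ Metric.ball (0 : EuclideanSpace ℂ (Fin k)) δ,
          ‖A.symm (F z) - z‖ ≤ C * ‖z‖ ^ 2)
    (F : ℕ → EuclideanSpace ℂ (Fin k) → EuclideanSpace ℂ (Fin k))
    (hF : ∀ j, 1 ≤ j → IsAutomorphism (F j) ∧ F j 0 = 0 ∧
      ∀ z ∈ Metric.ball (0 : EuclideanSpace ℂ (Fin k)) δ,
        s * ‖z‖ ≤ ‖F j z‖ ∧ ‖F j z‖ ≤ r * ‖z‖) :
    ∃ A : ℕ → (EuclideanSpace ℂ (Fin k) ≃L[ℂ] EuclideanSpace ℂ (Fin k)),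
      (∀ j, 1 ≤ j →
        (A j : EuclideanSpace ℂ (Fin k) →L[ℂ] EuclideanSpace ℂ (Fin k))
          = fderiv ℂ (F j) 0) ∧
      ∀ z ∈ Metric.ball (0 : EuclideanSpace ℂ (Fin k)) δ, ∀ j : ℕ,
        ‖(equivComp A (j + 1)).symm (seqComp F (j + 1) z)
            - (equivComp A j).symm (seqComp F j z)‖
          ≤ C * δ ^ 2 * (r ^ 2 / s) ^ j := by
  have hex : ∀ j, ∃ A : EuclideanSpace ℂ (Fin k) ≃L[ℂ] EuclideanSpace ℂ (Fin k),
      1 ≤ j → (A : EuclideanSpace ℂ (Fin k) →L[ℂ] _) = fderiv ℂ (F j) 0 := by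
    intro j
    by_cases hj : 1 ≤ j
    · obtain ⟨⟨hd, G, hG, hGF, hFG⟩, -⟩ := hF j hj
      obtain ⟨A, hA⟩ := exists_continuousLinearEquiv_coe_eq_fderiv (hd 0) (hG _) hGF hFG
      exact ⟨A, fun _ => hA⟩
    · exact ⟨.refl ℂ _, fun h => absurd h hj⟩
  choose A hA using hex
  have hAsymm : ∀ j, 1 ≤ j → ∀ w, ‖(A j).symm w‖ ≤ s⁻¹ * ‖w‖ := by
    intro j hj
    obtain ⟨⟨hd, -⟩, h0, hbd⟩ := hF j hj
    refine ContinuousLinearEquiv.norm_symm_apply_le_of_mul_norm_le hs fun v => ?_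
    have hlow : ∀ᶠ z in 𝓝 0, s * ‖z‖ ≤ ‖F j z‖ :=
      eventually_of_mem (ball_mem_nhds 0 hδ) fun z hz => (hbd z hz).1
    simpa [← hA j hj] using ((hd 0).hasFDerivAt.restrictScalars ℝ).mul_norm_le_norm_apply h0 hlow v
  refine ⟨A, hA, fun z hz j => ?_⟩
  refine norm_equivComp_symm_seqComp_succ_sub_le hs (hs.trans hsr).le hr1.le hC.le hAsymm
    (fun j hj z hz => ((hF j hj).2.2 z hz).2) (fun j hj => ?_) hz j
  obtain ⟨⟨hd, G, -, hGF, -⟩, h0, hbd⟩ := hF j hj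
  exact hquad _ hd.differentiableOn hGF.injective.injOn h0 hbd _ (hA j hj)

theorem telescoping_estimate_for_normalized_compositions (k : ℕ) (hk : 2 ≤ k)
    (s r δ C : ℝ) (hs : 0 < s) (hsr : s < r) (hr1 : r < 1) (hδ : 0 < δ) (hC : 0 < C)
    -- `C` is the constant from the quadratic estimate for the family `Γ(s,r,δ)`:
    (hquad : ∀ F : EuclideanSpace ℂ (Fin k) → EuclideanSpace ℂ (Fin k),
      DifferentiableOn ℂ F (Metric.ball 0 δ) →
      Set.InjOn F (Metric.ball 0 δ) →
      F 0 = 0 →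
      (∀ z ∈ Metric.ball (0 : EuclideanSpace ℂ (Fin k)) δ,
        s * ‖z‖ ≤ ‖F z‖ ∧ ‖F z‖ ≤ r * ‖z‖) →
      ∀ A : EuclideanSpace ℂ (Fin k) ≃L[ℂ] EuclideanSpace ℂ (Fin k),
        (A : EuclideanSpace ℂ (Fin k) →L[ℂ] EuclideanSpace ℂ (Fin k)) = fderiv ℂ F 0 →
        ∀ z ∈ Metric.ball (0 : EuclideanSpace ℂ (Fin k)) δ,
          ‖A.symm (F z) - z‖ ≤ C * ‖z‖ ^ 2)
    (F : ℕ → EuclideanSpace ℂ (Fin k) → EuclideanSpace ℂ (Fin k))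
    (hF : ∀ j, 1 ≤ j → IsAutomorphism (F j) ∧ F j 0 = 0 ∧
      ∀ z ∈ Metric.ball (0 : EuclideanSpace ℂ (Fin k)) δ,
        s * ‖z‖ ≤ ‖F j z‖ ∧ ‖F j z‖ ≤ r * ‖z‖) :
    ∃ A : ℕ → (EuclideanSpace ℂ (Fin k) ≃L[ℂ] EuclideanSpace ℂ (Fin k)),
      (∀ j, 1 ≤ j →
        (A j : EuclideanSpace ℂ (Fin k) →L[ℂ] EuclideanSpace ℂ (Fin k))
          = fderiv ℂ (F j) 0) ∧
      ∀ z ∈ Metric.ball (0 : EuclideanSpace ℂ (Fin k)) δ, ∀ j : ℕ,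
        ‖(equivComp A (j + 1)).symm (seqComp F (j + 1) z)
            - (equivComp A j).symm (seqComp F j z)‖
          ≤ C * δ ^ 2 * (r ^ 2 / s) ^ j :=
  telescoping_estimate_for_normalized_compositions_general k s r δ C hs hsr hr1 hδ hC hquad F hF
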